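/- arXiv:1707.02417 — 3 statements merged into one kernel-verified Lean document; each statement's English description precedes it below -/
import Mathlib

section
/- For every natural number n, Σ_{k=0}^{n-1} (-1)^{n+k} (2k+1)/((n-k)(n+k+1)) = -(H_{2n} - H_n). -/
/-- The `N`-th harmonic number `H_N = ∑_{k=1}^N 1/k` (with `H_0 = 0`). -/
noncomputable def H (N : ℕ) : ℝ := ∑ k ∈ Finset.Icc 1 N, (1 : ℝ) / k

/-!
By partial fractions, `(2k+1)/((n-k)(n+k+1)) = 1/(n-k) - 1/(n+k+1)`, so the sum splits into
two pieces of the alternating harmonic series `∑ (-1)^(m+1)/(m+1)`: the terms `m < n` (read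
backwards) and the terms `n ≤ m < 2n`. Together they form the partial sum of length `2n`, and
Catalan's identity `∑_{m<2N} (-1)^(m+1)/(m+1) = H_N - H_{2N}` finishes the proof.
-/

open Finset

lemma H_succ (N : ℕ) : H (N + 1) = H N + 1 / (N + 1) := by
  rw [H, H, sum_Icc_succ_top (by omega)]
  push_cast
  ring

lemma sum_range_two_mul_neg_one_pow_div_eq_H_sub_H (N : ℕ) :
    ∑ m ∈ range (2 * N), (-1 : ℝ) ^ (m + 1) / (m + 1) = H N - H (2 * N) := by
  induction N with
  | zero => simp [H]
  | succ N ih =>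
    rw [show 2 * (N + 1) = 2 * N + 1 + 1 by ring, sum_range_succ, sum_range_succ, ih,
      H_succ, H_succ, H_succ]
    simp only [pow_succ, pow_mul]
    push_cast
    field_simp
    ring

lemma neg_one_pow_mul_div_mul_eq_add_of_lt {n k : ℕ} (hk : k < n) :
    (-1 : ℝ) ^ (n + k) * (2 * k + 1) / ((n - k) * (n + k + 1)) =
      (-1 : ℝ) ^ (n - 1 - k + 1) / ((n - 1 - k : ℕ) + 1) +
        (-1 : ℝ) ^ (n + k + 1) / ((n + k : ℕ) + 1) := by
  obtain ⟨j, rfl⟩ := Nat.exists_eq_add_of_lt hk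
  have hsub : k + j + 1 - 1 - k = j := by omega
  have hpos : ((k + j + 1 : ℕ) : ℝ) - k ≠ 0 := by push_cast; linarith [j.cast_nonneg (α := ℝ)]
  have hpos' : ((k + j + 1 : ℕ) : ℝ) + k + 1 ≠ 0 := by positivity
  rw [hsub, show k + j + 1 + k = j + 2 * k + 1 by ring]
  simp only [pow_succ, pow_add, pow_mul]
  push_cast at hpos ⊢
  field_simp
  ring

/-- For every natural number `n`,
`∑_{k=0}^{n-1} (-1)^{n+k} (2k+1)/((n-k)(n+k+1)) = -(H_{2n} - H_n)`. -/
theorem alternating_sum_eq_neg_harmonic_diff (n : ℕ) :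
    ∑ k ∈ Finset.range n,
        (-1 : ℝ) ^ (n + k) * (2 * k + 1) / (((n : ℝ) - k) * ((n : ℝ) + k + 1)) =
      -(H (2 * n) - H n) := by
  set a : ℕ → ℝ := fun m => (-1 : ℝ) ^ (m + 1) / (m + 1)
  calc ∑ k ∈ range n, (-1 : ℝ) ^ (n + k) * (2 * k + 1) / ((n - k) * (n + k + 1))
      = ∑ k ∈ range n, (a (n - 1 - k) + a (n + k)) :=
        sum_congr rfl fun k hk => neg_one_pow_mul_div_mul_eq_add_of_lt (mem_range.mp hk)
    _ = ∑ m ∈ range n, a m + ∑ k ∈ range n, a (n + k) := by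
        rw [sum_add_distrib, sum_range_reflect a n]
    _ = ∑ m ∈ range (2 * n), a m := by rw [two_mul, sum_range_add]
    _ = -(H (2 * n) - H n) := by
        rw [sum_range_two_mul_neg_one_pow_div_eq_H_sub_H]
        ring
end

section
/- For every natural number n, the polynomial B_n satisfies the differential identity d/dz[(1-z^2) dB_n(z)/dz] + n(n+1) B_n(z) = 4[(z+1) dP_n(z)/dz - n P_n(z)] for all real z. -/
/-- The Legendre polynomial of degree `n`,
`P_n(z) = 2^{-n} ∑_{k=0}^{n} (binom(n,k))² (z-1)^{n-k} (z+1)^k`, as a function on `ℝ`. -/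
noncomputable def P (n : ℕ) (z : ℝ) : ℝ :=
  (∑ k ∈ Finset.range (n + 1), ((n.choose k : ℝ)) ^ 2 * (z - 1) ^ (n - k) * (z + 1) ^ k) / 2 ^ n

/-- `B_n(z) = 4(H_{2n} - H_n) P_n(z) + 4 ∑_{k=0}^{n-1} (2k+1)/((n-k)(n+k+1)) P_k(z)`. -/
noncomputable def B (n : ℕ) (z : ℝ) : ℝ :=
  4 * (H (2 * n) - H n) * P n z +
    4 * ∑ k ∈ Finset.range n,
      (2 * (k : ℝ) + 1) / (((n : ℝ) - k) * ((n : ℝ) + k + 1)) * P k z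

/-!
The proof runs through Rodrigues' formula `P_n = D^n W_n` with `W_n = (z² - 1)^n / (2^n n!)`.
The weights satisfy `W'_{n+1} = z W_n` and `(z² - 1) W'_n = 2n z W_n`; differentiating these
`n` and `n + 1` times (Leibniz) gives Legendre's equation `((1 - z²) P_n')' = -n(n+1) P_n` and the
recurrences `P'_{n+1} = z P'_n + (n+1) P_n`, `(z² - 1) P'_n = (n+1)(P_{n+1} - z P_n)`. The
recurrences telescope to `(z+1) P'_n - n P_n = ∑_{k<n} (2k+1) P_k`. On the other side, since `P_k`
is an eigenfunction of `f ↦ ((1 - z²) f')'` with eigenvalue `-k(k+1)` and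
`n(n+1) - k(k+1) = (n-k)(n+k+1)`, the operator `f ↦ ((1 - z²) f')' + n(n+1) f` kills the `P_n`
term of `B_n` and sends its `P_k` term to `4(2k+1) P_k`.
-/

open Polynomial Finset
open scoped Nat

theorem Nat.choose_mul_descFactorial_mul_descFactorial {n k : ℕ} (hk : k ≤ n) :
    n.choose k * (n.descFactorial (n - k) * n.descFactorial k) = n ! * n.choose k ^ 2 := by
  rw [Nat.descFactorial_eq_factorial_mul_choose, Nat.descFactorial_eq_factorial_mul_choose,
    Nat.choose_symm hk, ← Nat.choose_mul_factorial_mul_factorial hk]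
  ring

namespace Polynomial

theorem iterate_derivative_derivative_mul_sq_sub_one {R : Type*} [CommRing R] (k : ℕ)
    (p : R[X]) :
    derivative^[k] (derivative p * (X ^ 2 - 1)) =
      derivative^[k + 1] p * (X ^ 2 - 1) + 2 * (k : R[X]) * (derivative^[k] p * X) +
        (k : R[X]) * ((k : R[X]) - 1) * derivative^[k - 1] p := by
  have hprev : k • derivative^[k - 1] (derivative p * X) =
      (k : R[X]) * (derivative^[k] p * X) +
        (k : R[X]) * ((k : R[X]) - 1) * derivative^[k - 1] p := by
    rcases k with _ | k
    · simp
    · rw [add_tsub_cancel_right, iterate_derivative_derivative_mul_X, nsmul_eq_mul, nsmul_eq_mul]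
      push_cast
      ring
  rw [show derivative p * (X ^ 2 - 1) = derivative p * X * X - derivative p by ring,
    iterate_derivative_sub, iterate_derivative_mul_X, iterate_derivative_derivative_mul_X, hprev,
    ← Function.iterate_succ_apply, nsmul_eq_mul]
  ring

variable {K : Type*} [Field K]

variable (K) in
noncomputable def rodriguesPoly (n : ℕ) : K[X] := C ((2 ^ n * n ! : K)⁻¹) * (X ^ 2 - 1) ^ n

variable (K) in
/-- Defined by Rodrigues' formula; `legendre_eq_sum` gives the explicit sum used for `P`. -/
noncomputable def legendre (n : ℕ) : K[X] := derivative^[n] (rodriguesPoly K n)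

variable (K) in
noncomputable def legendreOperator : K[X] →ₗ[K] K[X] :=
  derivative ∘ₗ LinearMap.mulLeft K (1 - X ^ 2) ∘ₗ derivative

theorem derivative_rodriguesPoly_mul_sq_sub_one (n : ℕ) :
    derivative (rodriguesPoly K n) * (X ^ 2 - 1) = (2 * n) • (rodriguesPoly K n * X) := by
  rcases n with _ | n
  · simp [rodriguesPoly]
  · simp only [rodriguesPoly, derivative_C_mul, derivative_pow, derivative_sub, derivative_X,
      derivative_one, add_tsub_cancel_right, nsmul_eq_mul, map_natCast]
    push_cast
    ring

theorem derivative_rodriguesPoly_succ [CharZero K] (n : ℕ) :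
    derivative (rodriguesPoly K (n + 1)) = rodriguesPoly K n * X := by
  have hscale : ((2 : K) ^ (n + 1) * (n + 1)!)⁻¹ * ((n + 1 : ℕ) * 2) = ((2 : K) ^ n * n !)⁻¹ := by
    rw [Nat.factorial_succ]
    push_cast
    field_simp
    ring
  rw [rodriguesPoly, rodriguesPoly, derivative_C_mul, derivative_pow, ← hscale, map_mul, map_mul,
    map_natCast, map_ofNat, add_tsub_cancel_right]
  simp only [derivative_sub, derivative_X_pow, derivative_one, Nat.cast_ofNat, map_ofNat]
  push_cast
  ring

theorem legendre_succ [CharZero K] (n : ℕ) :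
    legendre K (n + 1) = legendre K n * X + n • derivative^[n - 1] (rodriguesPoly K n) := by
  rw [legendre, Function.iterate_succ_apply, derivative_rodriguesPoly_succ,
    iterate_derivative_mul_X, legendre]

theorem derivative_legendre_succ [CharZero K] (n : ℕ) :
    derivative (legendre K (n + 1)) =
      derivative (legendre K n) * X + ((n : K[X]) + 1) * legendre K n := by
  rw [legendre, ← Function.iterate_succ_apply' derivative, Function.iterate_succ_apply,
    derivative_rodriguesPoly_succ, iterate_derivative_mul_X, add_tsub_cancel_right,
    Function.iterate_succ_apply', legendre, nsmul_eq_mul, Nat.cast_succ]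

/-- Both sides equal `n(n+1) D^{n-1} W_n`: apply `D^n` to `(X² - 1) W'_n = 2n X W_n`. -/
theorem derivative_legendre_mul_sq_sub_one [CharZero K] (n : ℕ) :
    derivative (legendre K n) * (X ^ 2 - 1) =
      ((n : K[X]) + 1) * (legendre K (n + 1) - legendre K n * X) := by
  have h := congrArg (derivative^[n]) (derivative_rodriguesPoly_mul_sq_sub_one (K := K) n)
  rw [iterate_derivative_derivative_mul_sq_sub_one, iterate_derivative_smul,
    iterate_derivative_mul_X, Function.iterate_succ_apply'] at h
  rw [legendre_succ]
  simp only [legendre, nsmul_eq_mul] at h ⊢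
  push_cast at h ⊢
  linear_combination h

theorem legendre_ode (n : ℕ) :
    derivative (derivative (legendre K n)) * (X ^ 2 - 1) + 2 * derivative (legendre K n) * X =
      (n : K[X]) * ((n : K[X]) + 1) * legendre K n := by
  have h := congrArg (derivative^[n + 1]) (derivative_rodriguesPoly_mul_sq_sub_one (K := K) n)
  rw [iterate_derivative_derivative_mul_sq_sub_one, iterate_derivative_smul,
    iterate_derivative_mul_X, add_tsub_cancel_right] at h
  simp only [legendre, nsmul_eq_mul, Function.iterate_succ_apply'] at h ⊢
  push_cast at h ⊢
  linear_combination h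

theorem legendreOperator_legendre (n : ℕ) :
    legendreOperator K (legendre K n) = (-((n : K) * (n + 1))) • legendre K n := by
  simp only [legendreOperator, LinearMap.comp_apply, LinearMap.mulLeft_apply, derivative_mul,
    derivative_sub, derivative_one, derivative_X_pow_succ, pow_one, zero_sub, smul_eq_C_mul,
    map_neg, map_mul, map_add, map_natCast, map_one, Nat.cast_one]
  linear_combination -legendre_ode (K := K) n

theorem legendre_eq_sum [CharZero K] (n : ℕ) :
    legendre K n = C ((2 ^ n : K)⁻¹) *
      ∑ k ∈ range (n + 1), C ((n.choose k : K) ^ 2) * (X - 1) ^ (n - k) * (X + 1) ^ k := by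
  have hadd (j : ℕ) :
      derivative^[j] ((X + 1 : K[X]) ^ n) = n.descFactorial j • (X + 1) ^ (n - j) := by
    simpa using iterate_derivative_X_add_pow n j (1 : K)
  have hsub (j : ℕ) :
      derivative^[j] ((X - 1 : K[X]) ^ n) = n.descFactorial j • (X - 1) ^ (n - j) := by
    simpa using iterate_derivative_X_sub_pow n j (1 : K)
  rw [legendre, rodriguesPoly, iterate_derivative_C_mul,
    show (X ^ 2 - 1 : K[X]) ^ n = (X + 1) ^ n * (X - 1) ^ n by rw [← mul_pow]; ring,
    iterate_derivative_mul, mul_sum, mul_sum]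
  refine sum_congr rfl fun k hk => ?_
  have hkn : k ≤ n := Nat.lt_succ_iff.mp (mem_range.mp hk)
  have hfac : (n ! : K) ≠ 0 := Nat.cast_ne_zero.mpr (Nat.factorial_ne_zero n)
  rw [hadd, hsub, Nat.sub_sub_self hkn]
  calc _ = C ((2 ^ n * n ! : K)⁻¹ *
          ((n.choose k * (n.descFactorial (n - k) * n.descFactorial k) : ℕ) : K)) *
        ((X - 1) ^ (n - k) * (X + 1) ^ k) := by
        simp only [nsmul_eq_mul, map_mul, map_natCast]
        push_cast
        ring
    _ = _ := by
      rw [Nat.choose_mul_descFactorial_mul_descFactorial hkn,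
        show (2 ^ n * n ! : K)⁻¹ * ((n ! * n.choose k ^ 2 : ℕ) : K) = (2 ^ n)⁻¹ * n.choose k ^ 2 by
          push_cast; field_simp, map_mul]
      ring

theorem X_add_one_mul_derivative_legendre_sub [CharZero K] (n : ℕ) :
    (X + 1) * derivative (legendre K n) - (n : K) • legendre K n =
      ∑ k ∈ range n, (2 * k + 1 : K) • legendre K k := by
  induction n with
  | zero => simp [legendre, rodriguesPoly]
  | succ n ih =>
    rw [sum_range_succ, ← ih, derivative_legendre_succ]
    simp only [smul_eq_C_mul, map_add, map_mul, map_natCast, map_ofNat, map_one, Nat.cast_succ]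
    linear_combination derivative_legendre_mul_sq_sub_one (K := K) n

end Polynomial

noncomputable def bPoly (n : ℕ) : ℝ[X] :=
  (4 * (H (2 * n) - H n)) • legendre ℝ n +
    (4 : ℝ) • ∑ k ∈ range n, ((2 * (k : ℝ) + 1) / ((n - k) * (n + k + 1))) • legendre ℝ k

theorem eval_legendre (n : ℕ) (z : ℝ) : (legendre ℝ n).eval z = P n z := by
  rw [legendre_eq_sum, P, div_eq_inv_mul]
  simp [eval_finsetSum]

theorem eval_bPoly (n : ℕ) (z : ℝ) : (bPoly n).eval z = B n z := by
  simp [bPoly, B, eval_finsetSum, eval_legendre, mul_sum]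

theorem legendreOperator_bPoly (n : ℕ) :
    legendreOperator ℝ (bPoly n) + ((n : ℝ) * (n + 1)) • bPoly n =
      (4 : ℝ) • ((X + 1) * derivative (legendre ℝ n) - (n : ℝ) • legendre ℝ n) := by
  have hcoeff (k : ℕ) (hk : k ∈ range n) :
      (2 * (k : ℝ) + 1) / ((n - k) * (n + k + 1)) * (n * (n + 1) - k * (k + 1)) = 2 * k + 1 := by
    have hkn : (k : ℝ) < n := by exact_mod_cast mem_range.mp hk
    rw [show (n : ℝ) * (n + 1) - k * (k + 1) = (n - k) * (n + k + 1) by ring,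
      div_mul_cancel₀ _ (mul_ne_zero (by linarith) (by linarith))]
  calc legendreOperator ℝ (bPoly n) + ((n : ℝ) * (n + 1)) • bPoly n
      = (4 : ℝ) • ∑ k ∈ range n, ((2 * (k : ℝ) + 1) / ((n - k) * (n + k + 1)) *
          (n * (n + 1) - k * (k + 1))) • legendre ℝ k := by
        simp only [bPoly, map_add, map_smul, map_sum, legendreOperator_legendre, smul_add,
          smul_sum, smul_smul]
        rw [add_add_add_comm, ← add_smul, ← sum_add_distrib,
          show ∀ a b : ℝ, a * -b + b * a = 0 from fun a b => by ring, zero_smul, zero_add]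
        refine sum_congr rfl fun k _ => ?_
        rw [← add_smul]
        congr 1
        ring
    _ = (4 : ℝ) • ∑ k ∈ range n, (2 * k + 1 : ℝ) • legendre ℝ k := by
        rw [sum_congr rfl fun k hk => by rw [hcoeff k hk]]
    _ = _ := by rw [X_add_one_mul_derivative_legendre_sub]

/-- For every natural number `n` and all real `z`,
`d/dz[(1-z²) B_n'(z)] + n(n+1) B_n(z) = 4[(z+1) P_n'(z) - n P_n(z)]`. -/
theorem B_differential_identity (n : ℕ) (z : ℝ) :
    deriv (fun z => (1 - z ^ 2) * deriv (B n) z) z + (n : ℝ) * ((n : ℝ) + 1) * B n z =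
      4 * ((z + 1) * deriv (P n) z - (n : ℝ) * P n z) := by
  have hB : B n = fun t => (bPoly n).eval t := funext fun t => (eval_bPoly n t).symm
  have hP : P n = fun t => (legendre ℝ n).eval t := funext fun t => (eval_legendre n t).symm
  have hflux : (fun t => (1 - t ^ 2) * deriv (B n) t) =
      fun t => ((1 - X ^ 2) * derivative (bPoly n)).eval t := by
    ext t
    simp [hB, Polynomial.deriv]
  rw [hflux, Polynomial.deriv, hB, hP, Polynomial.deriv]
  have h := congrArg (eval z) (legendreOperator_bPoly n)
  simp only [legendreOperator, LinearMap.comp_apply, LinearMap.mulLeft_apply, eval_add, eval_sub,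
    eval_smul, eval_mul, eval_X, eval_one, smul_eq_mul] at h
  linear_combination h
end

section
/- For every natural number n, the polynomial identity 2(z-1) dB_n(z)/dz + B_n(z) - 2(2n+1) R_n(z) = Σ_{k=0}^{n-1} [ (-1)^{n+k} 8(2k+1)(H_{2n} - H_n) + 8(2k+1) Σ_{m=k}^{n-1} (-1)^{m+k} (2m+1)/((n-m)(n+m+1)) - 4(2k+1)^2/((n-k)(n+k+1)) - (-1)^{n+k} 4(2n+1)(2k+1)/((n-k)(n+k+1)) ] P_k(z) holds for all real z. -/
/-- `R_n(z) = 2(H_{2n} - H_n) P_n(z)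
               + 2 ∑_{k=0}^{n-1} (-1)^{n+k} (2k+1)/((n-k)(n+k+1)) P_k(z)`. -/
noncomputable def R (n : ℕ) (z : ℝ) : ℝ :=
  2 * (H (2 * n) - H n) * P n z +
    2 * ∑ k ∈ Finset.range n,
      (-1 : ℝ) ^ (n + k) * (2 * (k : ℝ) + 1) / (((n : ℝ) - k) * ((n : ℝ) + k + 1)) * P k z

open Finset

lemma choose_mul_choose_sub_eq {n k t : ℕ} (hk : k ≤ n) (ht : t ≤ n) :
    n.choose k * k.choose (n - t) = n.choose t * t.choose (n - k) := by
  rcases lt_or_ge k (n - t) with h | h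
  · rw [Nat.choose_eq_zero_of_lt h, Nat.choose_eq_zero_of_lt (by omega : t < n - k), mul_zero,
      mul_zero]
  · rw [Nat.choose_mul h, Nat.choose_symm ht, show n - (n - t) = t by omega,
      ← Nat.choose_symm (show k - (n - t) ≤ t by omega),
      show t - (k - (n - t)) = n - k by omega]

lemma sum_choose_sq_mul_choose_sub {n t : ℕ} (ht : t ≤ n) :
    ∑ k ∈ range (n + 1), n.choose k ^ 2 * k.choose (n - t) = n.choose t * (n + t).choose n := by
  rw [Nat.add_choose_eq,
    Nat.sum_antidiagonal_eq_sum_range_succ (fun i j => n.choose i * t.choose j), mul_sum]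
  refine sum_congr rfl fun k hk => ?_
  rw [sq, mul_assoc, choose_mul_choose_sub_eq (mem_range_succ_iff.1 hk) ht, mul_left_comm]

lemma pow_sub_mul_one_add_pow {R : Type*} [CommSemiring R] (u : R) {k n : ℕ} (hk : k ≤ n) :
    u ^ (n - k) * (1 + u) ^ k = ∑ t ∈ range (n + 1), (k.choose (n - t) : R) * u ^ t := by
  calc u ^ (n - k) * (1 + u) ^ k = ∑ m ∈ range (k + 1), (k.choose m : R) * u ^ (n - m) := by
        rw [add_pow, mul_sum]
        refine sum_congr rfl fun m hm => ?_
        rw [one_pow, one_mul, ← mul_assoc, ← pow_add,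
          show n - k + (k - m) = n - m by have := mem_range_succ_iff.1 hm; omega, mul_comm]
    _ = ∑ m ∈ range (n + 1), (k.choose m : R) * u ^ (n - m) := by
        refine sum_subset (range_subset_range.2 (by omega)) fun m _ hm => ?_
        rw [Nat.choose_eq_zero_of_lt (by simpa using hm), Nat.cast_zero, zero_mul]
    _ = ∑ t ∈ range (n + 1), (k.choose (n - t) : R) * u ^ t := by
        rw [← sum_range_reflect]
        refine sum_congr rfl fun t ht => ?_
        rw [show n - (n + 1 - 1 - t) = t by have := mem_range.1 ht; omega, Nat.add_sub_cancel]

lemma P_eq_sum_choose_sq (n : ℕ) (z : ℝ) :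
    P n z = ∑ k ∈ range (n + 1),
      (n.choose k : ℝ) ^ 2 * (((z - 1) / 2) ^ (n - k) * (1 + (z - 1) / 2) ^ k) := by
  rw [P, sum_div]
  refine sum_congr rfl fun k hk => ?_
  have h2 : (2 : ℝ) ^ n = 2 ^ (n - k) * 2 ^ k := by
    rw [← pow_add, Nat.sub_add_cancel (mem_range_succ_iff.1 hk)]
  rw [show 1 + (z - 1) / 2 = (z + 1) / 2 by ring, div_pow, div_pow, h2]
  field_simp

/-- Up to the sign `(-1)ᵏ`, the coefficients of Mathlib's `Polynomial.shiftedLegendre`. -/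
noncomputable def legendreCoeff (n k : ℕ) : ℝ := n.choose k * (n + k).choose n

lemma P_eq_sum_legendreCoeff (n : ℕ) (z : ℝ) :
    P n z = ∑ t ∈ range (n + 1), legendreCoeff n t * ((z - 1) / 2) ^ t := by
  rw [P_eq_sum_choose_sq]
  calc _ = ∑ k ∈ range (n + 1), ∑ t ∈ range (n + 1),
        (n.choose k : ℝ) ^ 2 * (k.choose (n - t) : ℝ) * ((z - 1) / 2) ^ t := by
        refine sum_congr rfl fun k hk => ?_
        rw [pow_sub_mul_one_add_pow _ (mem_range_succ_iff.1 hk), mul_sum]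
        simp only [mul_assoc]
    _ = _ := by
        rw [sum_comm]
        refine sum_congr rfl fun t ht => ?_
        rw [← sum_mul, legendreCoeff]
        exact_mod_cast congrArg (fun m : ℕ => (m : ℝ) * ((z - 1) / 2) ^ t)
          (sum_choose_sq_mul_choose_sub (mem_range_succ_iff.1 ht))

lemma legendreCoeff_eq_zero_of_lt {n k : ℕ} (h : n < k) : legendreCoeff n k = 0 := by
  simp [legendreCoeff, Nat.choose_eq_zero_of_lt h]

lemma sub_mul_legendreCoeff_succ (j k : ℕ) :
    ((j : ℝ) + 1 - k) * legendreCoeff (j + 1) k = ((j : ℝ) + 1 + k) * legendreCoeff j k := by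
  rcases lt_or_ge (j + 1) k with h | h
  · rw [legendreCoeff_eq_zero_of_lt h, legendreCoeff_eq_zero_of_lt (by omega), mul_zero, mul_zero]
  have h1 : ((j + 1).choose k : ℝ) * ((j : ℝ) + 1 - k) = j.choose k * (j + 1) := by
    exact_mod_cast (Nat.choose_mul_succ_eq j k).symm
  have h2 : ((j + 1 + k).choose (j + 1) : ℝ) * (j + 1) = (j + k).choose j * (j + 1 + k) := by
    have := Nat.add_one_mul_choose_eq (j + k) j
    rw [show j + k + 1 = j + 1 + k by ring] at this
    exact_mod_cast this.symm.trans (mul_comm _ _)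
  refine mul_right_cancel₀ (show (j : ℝ) + 1 ≠ 0 by positivity) ?_
  unfold legendreCoeff
  linear_combination
    ((j + 1 + k).choose (j + 1) * ((j : ℝ) + 1)) * h1 + (j.choose k * ((j : ℝ) + 1)) * h2

lemma differentiable_P (n : ℕ) : Differentiable ℝ (P n) := by
  unfold P
  fun_prop

lemma sub_one_mul_deriv_P_eq_sum (n : ℕ) (z : ℝ) :
    (z - 1) * deriv (P n) z
      = ∑ t ∈ range (n + 1), t * legendreCoeff n t * ((z - 1) / 2) ^ t := by
  have hP : P n = fun w => ∑ t ∈ range (n + 1), legendreCoeff n t * ((w - 1) / 2) ^ t :=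
    funext (P_eq_sum_legendreCoeff n)
  have hderiv : HasDerivAt (P n)
      (∑ t ∈ range (n + 1), legendreCoeff n t * (t * ((z - 1) / 2) ^ (t - 1) * (1 / 2))) z := by
    rw [hP]
    exact HasDerivAt.fun_sum fun t _ =>
      ((((hasDerivAt_id' z).sub_const 1).div_const 2).pow t).const_mul _
  rw [hderiv.deriv, mul_sum]
  refine sum_congr rfl fun t _ => ?_
  rcases t with _ | t
  · simp
  · rw [Nat.add_sub_cancel, pow_succ]
    ring

lemma sub_one_mul_deriv_P_succ_add (n : ℕ) (z : ℝ) :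
    (z - 1) * (deriv (P (n + 1)) z + deriv (P n) z) = (n + 1) * (P (n + 1) z - P n z) := by
  set u := (z - 1) / 2
  have hcoeff : ∑ t ∈ range (n + 1), t * legendreCoeff (n + 1) t * u ^ t
      + ∑ t ∈ range (n + 1), t * legendreCoeff n t * u ^ t
      = (n + 1) * (∑ t ∈ range (n + 1), legendreCoeff (n + 1) t * u ^ t
        - ∑ t ∈ range (n + 1), legendreCoeff n t * u ^ t) := by
    rw [← sum_add_distrib, ← sum_sub_distrib, mul_sum]
    exact sum_congr rfl fun t _ => by
      linear_combination -u ^ t * sub_mul_legendreCoeff_succ n t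
  rw [mul_add, sub_one_mul_deriv_P_eq_sum, sub_one_mul_deriv_P_eq_sum, P_eq_sum_legendreCoeff,
    P_eq_sum_legendreCoeff, sum_range_succ _ (n + 1), sum_range_succ _ (n + 1)]
  push_cast
  linear_combination hcoeff

lemma sub_one_mul_deriv_P (n : ℕ) (z : ℝ) :
    (z - 1) * deriv (P n) z
      = n * P n z + ∑ j ∈ range n, (-1 : ℝ) ^ (n + j) * (2 * j + 1) * P j z := by
  induction n with
  | zero => simp [sub_one_mul_deriv_P_eq_sum]
  | succ n ih =>
    have hsign : ∑ j ∈ range n, (-1 : ℝ) ^ (n + 1 + j) * (2 * j + 1) * P j z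
        = -∑ j ∈ range n, (-1 : ℝ) ^ (n + j) * (2 * j + 1) * P j z := by
      rw [← sum_neg_distrib]
      exact sum_congr rfl fun j _ => by rw [add_right_comm, pow_succ]; ring
    rw [sum_range_succ, hsign, Odd.neg_one_pow ⟨n, by ring⟩]
    push_cast
    linear_combination sub_one_mul_deriv_P_succ_add n z - ih

lemma sub_one_mul_deriv_sum_P (a : ℕ → ℝ) (N : ℕ) (z : ℝ) :
    (z - 1) * deriv (fun w => ∑ k ∈ range N, a k * P k w) z
      = ∑ k ∈ range N,
          (k * a k + (2 * k + 1) * ∑ m ∈ Ico (k + 1) N, (-1 : ℝ) ^ (m + k) * a m)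
            * P k z := by
  have hderiv : HasDerivAt (fun w => ∑ k ∈ range N, a k * P k w)
      (∑ k ∈ range N, a k * deriv (P k) z) z :=
    HasDerivAt.fun_sum fun k _ => ((differentiable_P k z).hasDerivAt).const_mul (a k)
  have hswap := sum_Ico_Ico_comm' 0 N
    (fun j k => a k * ((-1 : ℝ) ^ (k + j) * (2 * j + 1) * P j z))
  simp only [← range_eq_Ico] at hswap
  calc (z - 1) * deriv (fun w => ∑ k ∈ range N, a k * P k w) z
      = ∑ k ∈ range N, (k * a k * P k z
          + ∑ j ∈ range k, a k * ((-1 : ℝ) ^ (k + j) * (2 * j + 1) * P j z)) := by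
        rw [hderiv.deriv, mul_sum]
        refine sum_congr rfl fun k _ => ?_
        rw [← mul_sum, mul_left_comm, sub_one_mul_deriv_P]
        ring
    _ = _ := by
        rw [sum_add_distrib, ← hswap, ← sum_add_distrib]
        refine sum_congr rfl fun k _ => ?_
        rw [mul_sum, add_mul, sum_mul]
        congr 1
        exact sum_congr rfl fun m _ => by ring

/-- For every natural number `n` and all real `z`,
`2(z-1) B_n'(z) + B_n(z) - 2(2n+1) R_n(z)
   = ∑_{k=0}^{n-1} [ (-1)^{n+k} 8(2k+1)(H_{2n} - H_n)
       + 8(2k+1) ∑_{m=k}^{n-1} (-1)^{m+k} (2m+1)/((n-m)(n+m+1))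
       - 4(2k+1)²/((n-k)(n+k+1))
       - (-1)^{n+k} 4(2n+1)(2k+1)/((n-k)(n+k+1)) ] P_k(z)`. -/
theorem rhs_expansion_in_legendre (n : ℕ) (z : ℝ) :
    2 * (z - 1) * deriv (B n) z + B n z - 2 * (2 * (n : ℝ) + 1) * R n z =
      ∑ k ∈ Finset.range n,
        ((-1 : ℝ) ^ (n + k) * (8 * (2 * (k : ℝ) + 1)) * (H (2 * n) - H n)
          + 8 * (2 * (k : ℝ) + 1) *
              ∑ m ∈ Finset.Ico k n,
                (-1 : ℝ) ^ (m + k) * (2 * (m : ℝ) + 1) / (((n : ℝ) - m) * ((n : ℝ) + m + 1))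
          - 4 * (2 * (k : ℝ) + 1) ^ 2 / (((n : ℝ) - k) * ((n : ℝ) + k + 1))
          - (-1 : ℝ) ^ (n + k) * (4 * (2 * (n : ℝ) + 1) * (2 * (k : ℝ) + 1)) /
              (((n : ℝ) - k) * ((n : ℝ) + k + 1))) * P k z := by
  set ΔH := H (2 * n) - H n
  set a : ℕ → ℝ := fun k => (2 * (k : ℝ) + 1) / (((n : ℝ) - k) * ((n : ℝ) + k + 1))
  have hB : HasDerivAt (B n)
      (4 * ΔH * deriv (P n) z + 4 * deriv (fun w => ∑ k ∈ range n, a k * P k w) z) z :=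
    ((differentiable_P n z).hasDerivAt.const_mul _).add
      ((Differentiable.fun_sum fun k _ => (differentiable_P k).const_mul (a k)) z
        |>.hasDerivAt.const_mul 4)
  rw [hB.deriv]
  trans 8 * ΔH * ∑ k ∈ range n, (-1 : ℝ) ^ (n + k) * (2 * k + 1) * P k z
      + 8 * ∑ k ∈ range n,
        (k * a k + (2 * k + 1) * ∑ m ∈ Ico (k + 1) n, (-1 : ℝ) ^ (m + k) * a m) * P k z
      + 4 * ∑ k ∈ range n, a k * P k z
      - 4 * (2 * n + 1) * ∑ k ∈ range n, (-1 : ℝ) ^ (n + k) * a k * P k z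
  · have hS := sub_one_mul_deriv_sum_P a n z
    unfold B R
    simp only [a, mul_div_assoc] at hS ⊢
    linear_combination 8 * ΔH * sub_one_mul_deriv_P n z + 8 * hS
  · simp only [mul_sum (range n), ← sum_add_distrib, ← sum_sub_distrib]
    refine sum_congr rfl fun k hk => ?_
    rw [sum_eq_sum_Ico_succ_bot (mem_range.1 hk), Even.neg_one_pow ⟨k, rfl⟩]
    simp only [a, mul_div_assoc]
    ring
end
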